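/- arXiv:1106.5130 — 2 statements merged into one kernel-verified Lean document; each statement's English description precedes it below -/
import Mathlib

section
/- Let β > 1 and let P = (p_1, p_2, …) be a probability distribution over the positive integers such that lim_{n→∞} p_n/(n^{−β}(log n)^{−2β}) exists and lies in (0, ∞). Then α_c(P) = 1/β and R(P) = [1/β, ∞); in particular H_{1/β}(P) < ∞ while H_α(P) = ∞ for all α < 1/β. -/
open Filter Topology
open scoped ENNReal

/-- A probability distribution over the positive integers (indexed by `ℕ`):
nonnegative masses summing to `1`. -/
def IsProbDist (p : ℕ → ℝ) : Prop :=
  (∀ n, 0 ≤ p n) ∧ HasSum p 1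

/-- The sum `∑ pₙ^α`, computed in `[0,∞]`, with the convention `0^0 = 0`. -/
noncomputable def renyiSum (p : ℕ → ℝ) (α : ℝ) : ℝ≥0∞ :=
  ∑' n, if p n = 0 then 0 else ENNReal.ofReal (p n ^ α)

/-- The Shannon entropy `H₁(P) = -∑ pₙ log pₙ`, valued in `[0,∞]`. -/
noncomputable def shannonEntropy (p : ℕ → ℝ) : ℝ≥0∞ :=
  ∑' n, ENNReal.ofReal (-(p n * Real.log (p n)))

/-- The Rényi entropy `H_α(P)`, valued in `[0,∞]`: for `α ≠ 1` it is
`(1/(1-α)) log ∑ pₙ^α` (equal to `∞` when the sum diverges), and for `α = 1`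
it is the Shannon entropy. -/
noncomputable def renyiEntropy (p : ℕ → ℝ) (α : ℝ) : ℝ≥0∞ :=
  if α = 1 then shannonEntropy p
  else if renyiSum p α = ∞ then ∞
  else ENNReal.ofReal ((1 - α)⁻¹ * Real.log (renyiSum p α).toReal)

/-- The region of convergence `R(P) = {α ≥ 0 : H_α(P) < ∞}`. -/
def convRegion (p : ℕ → ℝ) : Set ℝ :=
  {α : ℝ | 0 ≤ α ∧ renyiEntropy p α < ∞}

/-- The critical exponent `α_c(P) = inf {α ≥ 0 : H_α(P) < ∞}`. -/
noncomputable def criticalExponent (p : ℕ → ℝ) : ℝ :=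
  sInf (convRegion p)

/-- The total variation distance `d_TV(P,Q) = ∑ |pₙ - qₙ|`. -/
noncomputable def dTV (p q : ℕ → ℝ) : ℝ :=
  ∑' n, |p n - q n|

/-!
Eventually `p n` lies between constant multiples of `q n = n^(-β) (log n)^(-2β)`. At `α = 1/β`
this gives `p n ^ α ≲ 1 / (n (log n)^2)`, a convergent Bertrand series (Cauchy condensation);
for larger `α` the Rényi sum only decreases because `p n ≤ 1`, and the Shannon entropy is
dominated by `∑ p n ^ (1/β)` through `-x log x ≤ x^α / (1 - α)`. For `α < 1/β`, since logarithms
lose against powers, `q n ^ α ≥ n^(-s)` eventually for any `s ∈ (αβ, 1)`, so the sum diverges.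
-/

open Real

lemma IsProbDist.le_one {p : ℕ → ℝ} (hp : IsProbDist p) (n : ℕ) : p n ≤ 1 :=
  le_hasSum hp.2 n fun j _ => hp.1 j

lemma tsum_ofReal_ne_top_iff_summable {ι : Type*} {f : ι → ℝ} (hf : ∀ i, 0 ≤ f i) :
    ∑' i, ENNReal.ofReal (f i) ≠ ∞ ↔ Summable f := by
  refine ⟨fun h => ?_, Summable.tsum_ofReal_ne_top⟩
  simpa only [ENNReal.toReal_ofReal (hf _)] using ENNReal.summable_toReal h

lemma summable_inv_natCast_mul_log_sq : Summable fun n : ℕ => ((n : ℝ) * log n ^ 2)⁻¹ := by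
  rw [← summable_condensed_iff_of_eventually_nonneg]
  · refine ((summable_nat_pow_inv.2 one_lt_two).mul_right (log 2 ^ 2)⁻¹).congr fun k => ?_
    rw [Nat.cast_pow, Nat.cast_ofNat, log_pow, mul_inv, ← mul_assoc,
      mul_inv_cancel₀ (pow_ne_zero k two_ne_zero), one_mul, mul_pow, mul_inv]
  · exact Eventually.of_forall fun n => inv_nonneg.2 (by positivity)
  · filter_upwards [eventually_gt_atTop 1] with n hn
    have hn' : (1 : ℝ) < n := by exact_mod_cast hn
    have hlog : 0 < log n := log_pos hn'
    refine inv_anti₀ (by positivity) ?_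
    push_cast
    gcongr <;> linarith

lemma eventually_rpow_neg_le_rpow_neg_mul_log_rpow_neg (a b : ℝ) {ε : ℝ} (hε : 0 < ε) :
    ∀ᶠ x : ℝ in atTop, x ^ (-(a + ε)) ≤ x ^ (-a) * log x ^ (-b) := by
  filter_upwards [(isLittleO_log_rpow_rpow_atTop b hε).bound one_pos, eventually_gt_atTop 1]
    with x hlog hx
  have hx0 : 0 < x := by linarith
  have hlogx : 0 < log x := log_pos hx
  rw [one_mul, norm_of_nonneg (rpow_nonneg hlogx.le _), norm_of_nonneg (rpow_nonneg hx0.le _)]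
    at hlog
  calc x ^ (-(a + ε)) = x ^ (-a) * (x ^ ε)⁻¹ := by
        rw [← rpow_neg hx0.le, ← rpow_add hx0, neg_add]
    _ ≤ x ^ (-a) * (log x ^ b)⁻¹ := by gcongr
    _ = x ^ (-a) * log x ^ (-b) := by rw [rpow_neg hlogx.le]

lemma eventually_le_mul_and_le_mul_of_tendsto_div {ι : Type*} {l : Filter ι} {f g : ι → ℝ}
    {L : ℝ} (hL : 0 < L) (hg : ∀ᶠ i in l, 0 < g i) (h : Tendsto (fun i => f i / g i) l (𝓝 L)) :
    ∀ᶠ i in l, L / 2 * g i ≤ f i ∧ f i ≤ 2 * L * g i := by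
  filter_upwards [hg, h.eventually (lt_mem_nhds (half_lt_self hL)),
    h.eventually (gt_mem_nhds (by linarith : L < 2 * L))] with i hgi hlo hhi
  exact ⟨(le_div_iff₀ hgi).1 hlo.le, (div_le_iff₀ hgi).1 hhi.le⟩

lemma eventually_rpow_neg_mul_log_rpow_neg_pos (β : ℝ) :
    ∀ᶠ n : ℕ in atTop, 0 < (n : ℝ) ^ (-β) * log n ^ (-(2 * β)) := by
  filter_upwards [eventually_gt_atTop 1] with n hn
  have hn' : (1 : ℝ) < n := by exact_mod_cast hn
  exact mul_pos (rpow_pos_of_pos (by linarith) _) (rpow_pos_of_pos (log_pos hn') _)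

lemma rpow_neg_mul_rpow_neg_rpow {x y : ℝ} (hx : 0 ≤ x) (hy : 0 ≤ y) (β α : ℝ) :
    (x ^ (-β) * y ^ (-(2 * β))) ^ α = x ^ (-(β * α)) * y ^ (-(2 * β * α)) := by
  rw [mul_rpow (rpow_nonneg hx _) (rpow_nonneg hy _), ← rpow_mul hx, ← rpow_mul hy, neg_mul,
    neg_mul]

lemma neg_mul_log_le_rpow_div {x α : ℝ} (hx : 0 ≤ x) (hα : α < 1) :
    -(x * log x) ≤ x ^ α / (1 - α) := by
  rcases hx.eq_or_lt with rfl | hx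
  · simp only [zero_mul, neg_zero]
    exact div_nonneg (rpow_nonneg le_rfl _) (by linarith)
  calc -(x * log x) = x * log x⁻¹ := by rw [log_inv, mul_neg]
    _ ≤ x * ((x⁻¹) ^ (1 - α) / (1 - α)) := by
        gcongr; exact log_le_rpow_div (inv_nonneg.2 hx.le) (by linarith)
    _ = x ^ α / (1 - α) := by
        rw [inv_rpow hx.le, ← rpow_neg hx.le, mul_div_assoc', mul_comm, ← rpow_add_one hx.ne',
          neg_sub, sub_add_cancel]

section Renyi

variable {p : ℕ → ℝ}

lemma renyiSum_ne_top_iff (hp : ∀ n, 0 ≤ p n) (α : ℝ) :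
    renyiSum p α ≠ ∞ ↔ Summable fun n => if p n = 0 then 0 else p n ^ α := by
  have : renyiSum p α = ∑' n, ENNReal.ofReal (if p n = 0 then 0 else p n ^ α) := by
    simp only [renyiSum, apply_ite ENNReal.ofReal, ENNReal.ofReal_zero]
  rw [this, tsum_ofReal_ne_top_iff_summable fun n => ?_]
  split_ifs
  · exact le_rfl
  · exact rpow_nonneg (hp n) α

lemma renyiEntropy_lt_top_iff {α : ℝ} (hα : α ≠ 1) :
    renyiEntropy p α < ∞ ↔ renyiSum p α ≠ ∞ := by
  unfold renyiEntropy
  split_ifs <;> simp_all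

lemma renyiSum_anti (hp0 : ∀ n, 0 ≤ p n) (hp1 : ∀ n, p n ≤ 1) {α α' : ℝ} (h : α ≤ α') :
    renyiSum p α' ≤ renyiSum p α := by
  refine ENNReal.tsum_le_tsum fun n => ?_
  split_ifs with hpn
  · exact le_rfl
  · exact ENNReal.ofReal_le_ofReal
      (rpow_le_rpow_of_exponent_ge ((hp0 n).lt_of_ne' hpn) (hp1 n) h)

lemma shannonEntropy_le_mul_renyiSum (hp : ∀ n, 0 ≤ p n) {α : ℝ} (hα : α < 1) :
    shannonEntropy p ≤ ENNReal.ofReal (1 - α)⁻¹ * renyiSum p α := by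
  rw [renyiSum, ← ENNReal.tsum_mul_left]
  refine ENNReal.tsum_le_tsum fun n => ?_
  split_ifs with hpn
  · simp [hpn]
  · rw [← ENNReal.ofReal_mul (inv_nonneg.2 (by linarith)), inv_mul_eq_div]
    exact ENNReal.ofReal_le_ofReal (neg_mul_log_le_rpow_div (hp n) hα)

lemma renyiSum_one_div_ne_top_of_le {β : ℝ} (hβ : 0 < β) (hp : ∀ n, 0 ≤ p n) {C : ℝ}
    (hC : 0 ≤ C) (hle : ∀ᶠ n : ℕ in atTop, p n ≤ C * ((n : ℝ) ^ (-β) * log n ^ (-(2 * β)))) :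
    renyiSum p (1 / β) ≠ ∞ := by
  rw [renyiSum_ne_top_iff hp]
  refine (summable_inv_natCast_mul_log_sq.mul_left (C ^ (1 / β))).of_norm_bounded_eventually_nat ?_
  filter_upwards [hle] with n hn
  have hlog : 0 ≤ log n := log_natCast_nonneg n
  calc ‖if p n = 0 then 0 else p n ^ (1 / β)‖ ≤ p n ^ (1 / β) := by
        split_ifs
        · simpa using rpow_nonneg (hp n) _
        · exact (norm_of_nonneg (rpow_nonneg (hp n) _)).le
    _ ≤ (C * ((n : ℝ) ^ (-β) * log n ^ (-(2 * β)))) ^ (1 / β) :=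
        rpow_le_rpow (hp n) hn (by positivity)
    _ = C ^ (1 / β) * ((n : ℝ) * log n ^ 2)⁻¹ := by
        rw [mul_rpow hC (by positivity), rpow_neg_mul_rpow_neg_rpow n.cast_nonneg hlog,
          mul_one_div_cancel hβ.ne', mul_assoc, mul_one_div_cancel hβ.ne', rpow_neg_one,
          rpow_neg hlog, mul_one, rpow_two, mul_inv]

lemma renyiSum_eq_top_of_le {β : ℝ} (hp : ∀ n, 0 ≤ p n) {c : ℝ} (hc : 0 < c)
    (hle : ∀ᶠ n : ℕ in atTop, c * ((n : ℝ) ^ (-β) * log n ^ (-(2 * β))) ≤ p n)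
    {α : ℝ} (hα0 : 0 ≤ α) (hαβ : α * β < 1) : renyiSum p α = ∞ := by
  obtain ⟨s, hαβs, hs1⟩ := exists_between hαβ
  by_contra hfin
  rw [← ne_eq, renyiSum_ne_top_iff hp] at hfin
  have hlog := tendsto_natCast_atTop_atTop.eventually
    (eventually_rpow_neg_le_rpow_neg_mul_log_rpow_neg (β * α) (2 * β * α)
      (by linarith : 0 < s - β * α))
  have hsum : Summable fun n : ℕ => c ^ α * (n : ℝ) ^ (-s) := by
    refine hfin.of_norm_bounded_eventually_nat ?_
    filter_upwards [hle, hlog, eventually_rpow_neg_mul_log_rpow_neg_pos β] with n hn hlogn hq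
    have hpn : 0 < p n := (mul_pos hc hq).trans_le hn
    calc ‖c ^ α * (n : ℝ) ^ (-s)‖ = c ^ α * (n : ℝ) ^ (-(β * α + (s - β * α))) := by
          rw [norm_of_nonneg (by positivity), add_sub_cancel]
      _ ≤ c ^ α * ((n : ℝ) ^ (-(β * α)) * log n ^ (-(2 * β * α))) := by gcongr
      _ = (c * ((n : ℝ) ^ (-β) * log n ^ (-(2 * β)))) ^ α := by
          rw [mul_rpow hc.le hq.le, rpow_neg_mul_rpow_neg_rpow n.cast_nonneg
            (log_natCast_nonneg n)]
      _ ≤ p n ^ α := rpow_le_rpow (mul_pos hc hq).le hn hα0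
      _ = if p n = 0 then 0 else p n ^ α := (if_neg hpn.ne').symm
  have := summable_nat_rpow.1 ((summable_mul_left_iff (rpow_pos_of_pos hc α).ne').1 hsum)
  linarith

end Renyi

/-- If `β > 1` and `lim pₙ / (n^{-β} (log n)^{-2β})` exists and
lies in `(0,∞)`, then `α_c(P) = 1/β` and `R(P) = [1/β, ∞)`; in particular
`H_{1/β}(P) < ∞` while `H_α(P) = ∞` for all `0 ≤ α < 1/β`. -/
theorem stmt6 (β : ℝ) (hβ : 1 < β) (p : ℕ → ℝ) (hp : IsProbDist p)
    (L : ℝ) (hL : 0 < L)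
    (hlim : Tendsto
      (fun n : ℕ => p n / ((n : ℝ) ^ (-β) * Real.log n ^ (-(2 * β))))
      atTop (𝓝 L)) :
    criticalExponent p = 1 / β ∧ convRegion p = Set.Ici (1 / β) ∧
    renyiEntropy p (1 / β) < ∞ ∧
    (∀ α : ℝ, 0 ≤ α → α < 1 / β → renyiEntropy p α = ∞) := by
  have hβ0 : 0 < β := by linarith
  have hinvβ : 1 / β < 1 := (div_lt_one hβ0).2 hβ
  obtain ⟨hlow, hup⟩ := eventually_and.1 <| eventually_le_mul_and_le_mul_of_tendsto_div hL
    (eventually_rpow_neg_mul_log_rpow_neg_pos β) hlim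
  have hsum : renyiSum p (1 / β) ≠ ∞ :=
    renyiSum_one_div_ne_top_of_le hβ0 hp.1 (by positivity) hup
  have hfin : ∀ α, 1 / β ≤ α → renyiEntropy p α < ∞ := by
    intro α hα
    rcases eq_or_ne α 1 with rfl | hα1
    · rw [renyiEntropy, if_pos rfl]
      exact (shannonEntropy_le_mul_renyiSum hp.1 hinvβ).trans_lt
        (ENNReal.mul_lt_top ENNReal.ofReal_lt_top hsum.lt_top)
    · exact (renyiEntropy_lt_top_iff hα1).2
        (ne_top_of_le_ne_top hsum (renyiSum_anti hp.1 hp.le_one hα))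
  have hinf : ∀ α : ℝ, 0 ≤ α → α < 1 / β → renyiEntropy p α = ∞ := fun α hα0 hα =>
    not_lt_top_iff.1 fun h => (renyiEntropy_lt_top_iff (hα.trans hinvβ).ne).1 h
      (renyiSum_eq_top_of_le hp.1 (half_pos hL) hlow hα0 ((lt_div_iff₀ hβ0).1 hα))
  have hreg : convRegion p = Set.Ici (1 / β) := by
    ext α
    exact ⟨fun ⟨hα0, hα⟩ => not_lt.1 fun h => (hinf α hα0 h ▸ hα).ne rfl,
      fun hα => ⟨(by positivity : (0 : ℝ) ≤ 1 / β).trans hα, hfin α hα⟩⟩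
  exact ⟨by rw [criticalExponent, hreg, csInf_Ici], hreg, hfin _ le_rfl, hinf⟩
end

section
/- Let P = (p_1, p_2, …) be a probability distribution over the positive integers such that lim_{n→∞} p_n·n·(log n)^3 exists and lies in (0, ∞). Then the Shannon entropy H_1(P) < ∞, but H_α(P) = ∞ for every α < 1, so that α_c(P) = 1 and R(P) = [1, ∞). -/
/-!
The hypothesis says `pₙ ≍ 1 / (n log³ n)`. Since also `pₙ ≥ 1 / n²` eventually, the Shannon terms
satisfy `-pₙ log pₙ ≤ 2 pₙ log n = O(1 / (n log² n))`, a convergent Bertrand series (Cauchy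
condensation). For `0 ≤ α < 1`, `(n log³ n)^α ≤ n` eventually, so `pₙ^α ≳ 1 / n` and `∑ pₙ^α`
diverges like the harmonic series. For `α > 1`, `pₙ^α ≤ pₙ` gives `∑ pₙ^α ≤ 1`.
-/

open Filter Topology
open scoped ENNReal

theorem summable_one_div_mul_log_sq :
    Summable fun n : ℕ => 1 / ((n : ℝ) * Real.log n ^ 2) := by
  -- shifted because the original sequence vanishes at `n = 1` and so is not antitone from there
  set g : ℕ → ℝ := fun n => 1 / (((n + 1 : ℕ) : ℝ) * Real.log (n + 1 : ℕ) ^ 2) with hg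
  refine (summable_nat_add_iff 1).1 ?_
  suffices Summable g by simpa [hg] using this
  have hanti : ∀ ⦃m n : ℕ⦄, 0 < m → m ≤ n → g n ≤ g m := by
    intro m n hm hmn
    have h1 : (1 : ℝ) < (m + 1 : ℕ) := by exact_mod_cast Nat.succ_lt_succ hm
    have h2 : ((m + 1 : ℕ) : ℝ) ≤ (n + 1 : ℕ) := by exact_mod_cast Nat.succ_le_succ hmn
    have := Real.log_pos h1
    simp only [hg]
    gcongr
  refine (summable_condensed_iff_of_nonneg (fun n => by positivity) hanti).1 ?_
  refine (Real.summable_one_div_nat_pow.2 one_lt_two |>.mul_left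
    (1 / Real.log 2 ^ 2)).of_norm_bounded_eventually_nat ?_
  filter_upwards [eventually_gt_atTop 0] with k hk
  have hk' : (0 : ℝ) < k := by exact_mod_cast hk
  have hlog : (k : ℝ) * Real.log 2 ≤ Real.log ((2 ^ k + 1 : ℕ) : ℝ) := by
    rw [← Real.log_pow]
    exact Real.log_le_log (by positivity) (by push_cast; linarith)
  have h2 : (0 : ℝ) < Real.log 2 := Real.log_pos one_lt_two
  have hpos : 0 < Real.log ((2 ^ k + 1 : ℕ) : ℝ) := by
    linarith [mul_pos hk' h2]
  rw [Real.norm_of_nonneg (by positivity)]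
  simp only [hg]
  calc (2 : ℝ) ^ k * (1 / (((2 ^ k + 1 : ℕ) : ℝ) * Real.log (2 ^ k + 1 : ℕ) ^ 2))
      ≤ 1 / Real.log (2 ^ k + 1 : ℕ) ^ 2 := by
        rw [mul_one_div, div_le_div_iff₀ (by positivity) (by positivity), one_mul]
        gcongr
        push_cast
        linarith
    _ ≤ 1 / ((k : ℝ) * Real.log 2) ^ 2 := by gcongr
    _ = 1 / Real.log 2 ^ 2 * (1 / (k : ℝ) ^ 2) := by field_simp

theorem ENNReal.tsum_ofReal_ne_top_of_eventually_le {ι : Type*} {f g : ι → ℝ}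
    (hg : Summable g) (hfg : ∀ᶠ i in cofinite, f i ≤ g i) :
    ∑' i, ENNReal.ofReal (f i) ≠ ∞ := by
  have hpos : Summable fun i => ((f i).toNNReal : ℝ) := by
    refine hg.abs.of_norm_bounded_eventually ?_
    filter_upwards [hfg] with i hi
    rw [Real.coe_toNNReal', Real.norm_of_nonneg (le_max_right _ _)]
    exact max_le (hi.trans (le_abs_self _)) (abs_nonneg _)
  exact ENNReal.tsum_coe_ne_top_iff_summable.2 (NNReal.summable_coe.1 hpos)

theorem ENNReal.tsum_eq_top_of_eventually_ofReal_le {ι : Type*} {a : ι → ℝ≥0∞} {g : ι → ℝ}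
    (hg : ¬ Summable g) (hga : ∀ᶠ i in cofinite, 0 ≤ g i ∧ ENNReal.ofReal (g i) ≤ a i) :
    ∑' i, a i = ∞ := by
  by_contra ha
  refine hg ((ENNReal.summable_toReal ha).of_norm_bounded_eventually ?_)
  filter_upwards [hga] with i ⟨hg0, hgi⟩
  rw [Real.norm_of_nonneg hg0, ← ENNReal.toReal_ofReal hg0]
  exact ENNReal.toReal_mono (ENNReal.ne_top_of_tsum_ne_top ha i) hgi

theorem Real.eventually_log_pow_le_mul (k : ℕ) {c : ℝ} (hc : 0 < c) :
    ∀ᶠ x : ℝ in atTop, Real.log x ^ k ≤ c * x := by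
  filter_upwards [Real.isLittleO_pow_log_id_atTop.bound hc, eventually_ge_atTop 0] with x hx hx0
  rw [Real.norm_eq_abs, id, Real.norm_of_nonneg hx0] at hx
  exact (le_abs_self _).trans hx

theorem Real.eventually_mul_log_pow_rpow_le (k : ℕ) {α : ℝ} (hα₁ : α < 1) :
    ∀ᶠ x : ℝ in atTop, (x * Real.log x ^ k) ^ α ≤ x := by
  filter_upwards [(isLittleO_log_rpow_rpow_atTop (k * α) (sub_pos.2 hα₁)).bound one_pos,
    eventually_ge_atTop 1] with x hx hx1
  have hx0 : 0 < x := one_pos.trans_le hx1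
  have hlog : 0 ≤ Real.log x := Real.log_nonneg hx1
  rw [Real.norm_of_nonneg (by positivity), one_mul, Real.norm_of_nonneg (by positivity)] at hx
  calc (x * Real.log x ^ k) ^ α = x ^ α * Real.log x ^ (k * α) := by
        rw [Real.mul_rpow hx0.le (by positivity), Real.rpow_natCast_mul hlog]
    _ ≤ x ^ α * x ^ (1 - α) := by gcongr
    _ = x := by rw [← Real.rpow_add hx0, add_sub_cancel, Real.rpow_one]

theorem eventually_div_le_and_le_div_of_tendsto_mul {ι : Type*} {l : Filter ι} {p w : ι → ℝ}
    {L : ℝ} (hL : 0 < L) (hw : ∀ᶠ i in l, 0 < w i) (h : Tendsto (fun i => p i * w i) l (𝓝 L)) :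
    ∀ᶠ i in l, L / 2 / w i ≤ p i ∧ p i ≤ 2 * L / w i := by
  filter_upwards [hw, h.eventually (le_mem_nhds (half_lt_self hL)),
    h.eventually (ge_mem_nhds (by linarith : L < 2 * L))] with i hwi hlo hhi
  exact ⟨(div_le_iff₀ hwi).2 hlo, (le_div_iff₀ hwi).2 hhi⟩

section

variable {p : ℕ → ℝ} {L : ℝ}

theorem eventually_mem_Icc_of_tendsto_mul_log_cube (hL : 0 < L)
    (hlim : Tendsto (fun n : ℕ => p n * n * Real.log n ^ 3) atTop (𝓝 L)) :
    ∀ᶠ n : ℕ in atTop,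
      p n ∈ Set.Icc (L / 2 / (n * Real.log n ^ 3)) (2 * L / (n * Real.log n ^ 3)) := by
  have hw : ∀ᶠ n : ℕ in atTop, 0 < (n : ℝ) * Real.log n ^ 3 := by
    filter_upwards [eventually_ge_atTop 2] with n hn
    have : (1 : ℝ) < n := by exact_mod_cast hn
    have := Real.log_pos this
    positivity
  simp only [mul_assoc] at hlim
  exact eventually_div_le_and_le_div_of_tendsto_mul hL hw hlim

theorem eventually_neg_mul_log_le (hL : 0 < L)
    (hlim : Tendsto (fun n : ℕ => p n * n * Real.log n ^ 3) atTop (𝓝 L)) :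
    ∀ᶠ n : ℕ in atTop, -(p n * Real.log (p n)) ≤ 4 * L * (1 / (n * Real.log n ^ 2)) := by
  filter_upwards [eventually_mem_Icc_of_tendsto_mul_log_cube hL hlim, eventually_ge_atTop 2,
    tendsto_natCast_atTop_atTop.eventually (Real.eventually_log_pow_le_mul 3 (half_pos hL))]
    with n ⟨hlo, hhi⟩ hn hlog3
  have hn : (1 : ℝ) < n := by exact_mod_cast hn
  have hlog := Real.log_pos hn
  have hsq : 1 / (n : ℝ) ^ 2 ≤ p n := by
    refine le_trans ?_ hlo
    rw [div_le_div_iff₀ (by positivity) (by positivity)]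
    nlinarith
  have hp : 0 < p n := lt_of_lt_of_le (by positivity) hsq
  have hneglog : -Real.log (p n) ≤ 2 * Real.log n := by
    have hinv : (p n)⁻¹ ≤ (n : ℝ) ^ 2 := by
      rw [inv_le_comm₀ hp (by positivity)]
      simpa only [one_div] using hsq
    calc -Real.log (p n) = Real.log (p n)⁻¹ := (Real.log_inv _).symm
      _ ≤ Real.log ((n : ℝ) ^ 2) := Real.log_le_log (inv_pos.2 hp) hinv
      _ = 2 * Real.log n := by rw [Real.log_pow, Nat.cast_ofNat]
  calc -(p n * Real.log (p n)) = p n * -Real.log (p n) := by ring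
    _ ≤ p n * (2 * Real.log n) := by gcongr
    _ ≤ 2 * L / (n * Real.log n ^ 3) * (2 * Real.log n) := by gcongr
    _ = 4 * L * (1 / (n * Real.log n ^ 2)) := by field_simp; ring

theorem eventually_mul_inv_le_rpow (hL : 0 < L)
    (hlim : Tendsto (fun n : ℕ => p n * n * Real.log n ^ 3) atTop (𝓝 L))
    {α : ℝ} (hα₀ : 0 ≤ α) (hα₁ : α < 1) :
    ∀ᶠ n : ℕ in atTop, 0 < p n ∧ (L / 2) ^ α * (n : ℝ)⁻¹ ≤ p n ^ α := by
  filter_upwards [eventually_mem_Icc_of_tendsto_mul_log_cube hL hlim, eventually_ge_atTop 2,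
    tendsto_natCast_atTop_atTop.eventually (Real.eventually_mul_log_pow_rpow_le 3 hα₁)]
    with n ⟨hlo, _⟩ hn hpow
  have hn : (1 : ℝ) < n := by exact_mod_cast hn
  have hlog := Real.log_pos hn
  have hw : 0 < (n : ℝ) * Real.log n ^ 3 := by positivity
  refine ⟨lt_of_lt_of_le (by positivity) hlo, ?_⟩
  calc (L / 2) ^ α * (n : ℝ)⁻¹ ≤ (L / 2) ^ α / ((n : ℝ) * Real.log n ^ 3) ^ α := by
        rw [div_eq_mul_inv]
        exact mul_le_mul_of_nonneg_left (inv_anti₀ (by positivity) hpow) (by positivity)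
    _ = (L / 2 / ((n : ℝ) * Real.log n ^ 3)) ^ α := (Real.div_rpow (by positivity) hw.le _).symm
    _ ≤ p n ^ α := by gcongr

theorem shannonEntropy_ne_top_of_tendsto (hL : 0 < L)
    (hlim : Tendsto (fun n : ℕ => p n * n * Real.log n ^ 3) atTop (𝓝 L)) :
    shannonEntropy p ≠ ∞ :=
  ENNReal.tsum_ofReal_ne_top_of_eventually_le (summable_one_div_mul_log_sq.mul_left (4 * L))
    (Nat.cofinite_eq_atTop ▸ eventually_neg_mul_log_le hL hlim)

theorem renyiSum_eq_top_of_tendsto (hL : 0 < L)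
    (hlim : Tendsto (fun n : ℕ => p n * n * Real.log n ^ 3) atTop (𝓝 L))
    {α : ℝ} (hα₀ : 0 ≤ α) (hα₁ : α < 1) : renyiSum p α = ∞ := by
  have hc : 0 < (L / 2) ^ α := by positivity
  refine ENNReal.tsum_eq_top_of_eventually_ofReal_le
    ((summable_mul_left_iff hc.ne').not.2 Real.not_summable_natCast_inv) ?_
  filter_upwards [Nat.cofinite_eq_atTop ▸ eventually_mul_inv_le_rpow hL hlim hα₀ hα₁]
    with n ⟨hp, hle⟩
  rw [if_neg hp.ne']
  exact ⟨by positivity, ENNReal.ofReal_le_ofReal hle⟩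

theorem IsProbDist.renyiSum_le_one (hp : IsProbDist p) {α : ℝ} (hα : 1 ≤ α) :
    renyiSum p α ≤ 1 := by
  obtain ⟨hp₀, hp₁⟩ := hp
  calc renyiSum p α ≤ ∑' n, ENNReal.ofReal (p n) := by
        refine ENNReal.tsum_le_tsum fun n => ?_
        split_ifs with h
        · exact zero_le
        · refine ENNReal.ofReal_le_ofReal ?_
          calc p n ^ α ≤ p n ^ (1 : ℝ) := Real.rpow_le_rpow_of_exponent_ge
                ((hp₀ n).lt_of_ne' h) (le_hasSum hp₁ n fun j _ => hp₀ j) hα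
            _ = p n := Real.rpow_one _
    _ = 1 := by rw [← ENNReal.ofReal_tsum_of_nonneg hp₀ hp₁.summable, hp₁.tsum_eq,
                  ENNReal.ofReal_one]

theorem IsProbDist.renyiEntropy_lt_top_of_one_lt (hp : IsProbDist p) {α : ℝ} (hα : 1 < α) :
    renyiEntropy p α < ∞ := by
  have hfin : renyiSum p α ≠ ∞ := ne_top_of_le_ne_top ENNReal.one_ne_top (hp.renyiSum_le_one hα.le)
  rw [renyiEntropy, if_neg hα.ne', if_neg hfin]
  exact ENNReal.ofReal_lt_top

theorem renyiEntropy_eq_top_of_renyiSum_eq_top {α : ℝ} (hα : α ≠ 1) (h : renyiSum p α = ∞) :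
    renyiEntropy p α = ∞ := by
  rw [renyiEntropy, if_neg hα, if_pos h]

end

/-- If `lim pₙ · n · (log n)³` exists and lies in `(0,∞)`, then
the Shannon entropy `H₁(P) < ∞`, but `H_α(P) = ∞` for every `0 ≤ α < 1`,
so that `α_c(P) = 1` and `R(P) = [1,∞)`. -/
theorem stmt8 (p : ℕ → ℝ) (hp : IsProbDist p) (L : ℝ) (hL : 0 < L)
    (hlim : Tendsto (fun n : ℕ => p n * n * Real.log n ^ 3) atTop (𝓝 L)) :
    renyiEntropy p 1 < ∞ ∧
    (∀ α : ℝ, 0 ≤ α → α < 1 → renyiEntropy p α = ∞) ∧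
    criticalExponent p = 1 ∧ convRegion p = Set.Ici 1 := by
  have hshannon : renyiEntropy p 1 < ∞ := by
    rw [renyiEntropy, if_pos rfl]
    exact (shannonEntropy_ne_top_of_tendsto hL hlim).lt_top
  have hdiv : ∀ α : ℝ, 0 ≤ α → α < 1 → renyiEntropy p α = ∞ := fun α hα₀ hα₁ =>
    renyiEntropy_eq_top_of_renyiSum_eq_top hα₁.ne (renyiSum_eq_top_of_tendsto hL hlim hα₀ hα₁)
  have hregion : convRegion p = Set.Ici 1 := by
    ext α
    constructor
    · rintro ⟨hα₀, hfin⟩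
      by_contra hα₁
      exact hfin.ne (hdiv α hα₀ (not_le.1 hα₁))
    · intro (hα : 1 ≤ α)
      refine ⟨zero_le_one.trans hα, ?_⟩
      rcases hα.eq_or_lt with rfl | hα
      · exact hshannon
      · exact hp.renyiEntropy_lt_top_of_one_lt hα
  exact ⟨hshannon, hdiv, by rw [criticalExponent, hregion, csInf_Ici], hregion⟩
end
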